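/- There exist a, b ∈ ℂ with |a|² + |b|² = 1, giving the qubit unitary U = [[a, b], [−conj(b), conj(a)]], and a qubit density matrix ρ, such that for every θ ∈ ℝ: C_r(ρ) − C_r(U ρ U†) > 1 − H(|(U ψ_θ)₀|²). That is, the generalized de-cohering power of U in the relative entropy of coherence strictly exceeds its de-cohering power over maximally coherent states; the two de-cohering powers are not equal for qubit unitaries. -/

import Mathlib

open Matrix BigOperators ComplexOrder

/-- The l1-coherence of a matrix: the sum of the absolute values of its
off-diagonal entries. -/
noncomputable def Cl1 {n : ℕ} (A : Matrix (Fin n) (Fin n) ℂ) : ℝ :=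
  ∑ i, ∑ j, if i ≠ j then ‖A i j‖ else 0

/-- A density matrix: positive semidefinite with trace 1. -/
def IsDensity {n : ℕ} (ρ : Matrix (Fin n) (Fin n) ℂ) : Prop :=
  ρ.PosSemidef ∧ ρ.trace = 1

/-- A quantum operation (CPTP map) given by a finite family of Kraus operators. -/
def IsQuantumOp {n : ℕ} (Φ : Matrix (Fin n) (Fin n) ℂ → Matrix (Fin n) (Fin n) ℂ) : Prop :=
  ∃ (m : ℕ) (K : Fin m → Matrix (Fin n) (Fin n) ℂ),
    (∑ i, (K i)ᴴ * K i) = 1 ∧ ∀ ρ, Φ ρ = ∑ i, K i * ρ * (K i)ᴴ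

/-- The dephasing map `Δ`, keeping only the diagonal part of a matrix. -/
def Deph {n : ℕ} (A : Matrix (Fin n) (Fin n) ℂ) : Matrix (Fin n) (Fin n) ℂ :=
  Matrix.of fun i j => if i = j then A i j else 0

/-- The maximally coherent qubit state vector `(1/√2)(1, e^{iθ})`. -/
noncomputable def psi (θ : ℝ) : Fin 2 → ℂ :=
  ![1 / (Real.sqrt 2 : ℂ), Complex.exp (θ * Complex.I) / (Real.sqrt 2 : ℂ)]

/-- The outer product `w w†` of a vector with itself. -/
def outer {n : ℕ} (w : Fin n → ℂ) : Matrix (Fin n) (Fin n) ℂ :=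
  Matrix.vecMulVec w (star w)

/-- The qubit unitary `[[a, b], [-conj b, conj a]]`. -/
def Uab (a b : ℂ) : Matrix (Fin 2) (Fin 2) ℂ :=
  !![a, b; -(starRingEnd ℂ) b, (starRingEnd ℂ) a]

/-- The binary entropy (base 2), with the convention `0 · log 0 = 0`. -/
noncomputable def H (x : ℝ) : ℝ :=
  -(x * Real.logb 2 x) - (1 - x) * Real.logb 2 (1 - x)

/-- The relative entropy of coherence of a qubit density matrix:
`C_r(ρ) = H(ρ₀₀) − S(ρ)` where `S(ρ) = H((1+r)/2)` with
`r = sqrt((ρ₀₀ − ρ₁₁)² + 4|ρ₀₁|²)`. -/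
noncomputable def Cr2 (ρ : Matrix (Fin 2) (Fin 2) ℂ) : ℝ :=
  H ((ρ 0 0).re) -
    H ((1 + Real.sqrt (((ρ 0 0).re - (ρ 1 1).re) ^ 2 + 4 * ‖ρ 0 1‖ ^ 2)) / 2)

/-! Take `U = [[3/5, 4/5], [-4/5, 3/5]]` and the pure state `ρ = φφ†` with `φ = (3/5, 4/5)`,
which `U` rotates onto `(1, 0)`: the coherence of `ρ` drops from `H(9/25)` to `0`. On `ψ_θ`,
`|(Uψ_θ)₀|² = 1/2 + (12/25) cos θ` stays within `12/25` of `1/2`, so the loss there is at most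
`1 - H(49/50)`. Writing `n · H(k/n)` as the logarithm of `n^n / (k^k (n-k)^(n-k))`, the strict
inequality `H(9/25) + H(49/50) > 1` becomes `2^50 · 9^18 · 16^32 · 49^49 < 25^50 · 50^50`. -/

open Real

lemma mul_outer_mul_conjTranspose {n : ℕ} (M : Matrix (Fin n) (Fin n) ℂ) (w : Fin n → ℂ) :
    M * outer w * Mᴴ = outer (M *ᵥ w) := by
  rw [outer, outer, mul_vecMulVec, vecMulVec_mul, star_mulVec]

lemma isDensity_outer {n : ℕ} (w : Fin n → ℂ) (hw : ∑ i, ‖w i‖ ^ 2 = 1) :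
    IsDensity (outer w) := by
  refine ⟨posSemidef_vecMulVec_self_star w, ?_⟩
  simp only [outer, trace_vecMulVec, dotProduct, Pi.star_apply, RCLike.star_def,
    Complex.mul_conj, Complex.normSq_eq_norm_sq]
  exact_mod_cast hw

lemma H_one : H 1 = 0 := by simp [H]

lemma Cr2_outer (w : Fin 2 → ℂ) (hw : ‖w 0‖ ^ 2 + ‖w 1‖ ^ 2 = 1) :
    Cr2 (outer w) = H (‖w 0‖ ^ 2) := by
  have hdiag (i : Fin 2) : (outer w i i).re = ‖w i‖ ^ 2 := by
    rw [outer, vecMulVec_apply, Pi.star_apply, RCLike.star_def, Complex.mul_conj', ← Complex.ofReal_pow,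
      Complex.ofReal_re]
  have hoff : ‖outer w 0 1‖ = ‖w 0‖ * ‖w 1‖ := by simp [outer, vecMulVec_apply]
  have hdisc : (‖w 0‖ ^ 2 - ‖w 1‖ ^ 2) ^ 2 + 4 * (‖w 0‖ * ‖w 1‖) ^ 2 = 1 := by
    linear_combination (‖w 0‖ ^ 2 + ‖w 1‖ ^ 2 + 1) * hw
  rw [Cr2, hdiag, hdiag, hoff, hdisc]
  norm_num [H_one]

lemma H_eq_binEntropy_div_log_two (x : ℝ) : H x = binEntropy x / log 2 := by
  simp only [H, binEntropy, logb, log_inv]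
  ring

lemma binEntropy_eq_binEntropy_two_inv_add_abs (x : ℝ) :
    binEntropy x = binEntropy (2⁻¹ + |x - 2⁻¹|) := by
  rcases abs_cases (x - 2⁻¹) with ⟨h, _⟩ | ⟨h, _⟩
  · rw [h, add_sub_cancel]
  · rw [h, binEntropy_two_inv_add, sub_neg_eq_add, add_sub_cancel]

lemma H_le_H_of_abs_sub_half_le {x y : ℝ} (hy₀ : 0 ≤ y) (hy₁ : y ≤ 1)
    (h : |x - 2⁻¹| ≤ |y - 2⁻¹|) : H y ≤ H x := by
  rw [H_eq_binEntropy_div_log_two, H_eq_binEntropy_div_log_two,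
    binEntropy_eq_binEntropy_two_inv_add_abs x, binEntropy_eq_binEntropy_two_inv_add_abs y]
  have hy : |y - 2⁻¹| ≤ 2⁻¹ := abs_le.2 ⟨by linarith, by linarith⟩
  gcongr
  exact binEntropy_strictAntiOn.antitoneOn
    ⟨le_add_of_nonneg_right (abs_nonneg _), by linarith [abs_nonneg (x - 2⁻¹)]⟩
    ⟨le_add_of_nonneg_right (abs_nonneg _), by linarith⟩ (by linarith)

lemma norm_Uab_mulVec_psi_zero_sq (a b θ : ℝ) :
    ‖(Uab a b *ᵥ psi θ) 0‖ ^ 2 = (a ^ 2 + b ^ 2) / 2 + a * b * cos θ := by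
  have hentry : (Uab a b *ᵥ psi θ) 0 = (a + b * Complex.exp (θ * Complex.I)) / (√2 : ℝ) := by
    simp [Uab, psi, mulVec, dotProduct, Fin.sum_univ_two, div_eq_mul_inv, add_mul, mul_assoc]
  rw [hentry, norm_div, div_pow, Complex.norm_real, norm_of_nonneg (sqrt_nonneg 2),
    sq_sqrt zero_le_two, Complex.sq_norm, Complex.normSq_apply]
  simp only [Complex.add_re, Complex.add_im, Complex.mul_re, Complex.mul_im, Complex.ofReal_re,
    Complex.ofReal_im, Complex.exp_ofReal_mul_I_re, Complex.exp_ofReal_mul_I_im]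
  linear_combination (b ^ 2 / 2) * sin_sq_add_cos_sq θ

lemma add_mul_binEntropy_div_add (k n : ℕ) (hk : 0 < k) (hn : 0 < n) :
    (k + n : ℝ) * binEntropy (k / (k + n)) = log ((k + n) ^ (k + n) / (k ^ k * n ^ n)) := by
  have hk' : (k : ℝ) ≠ 0 := by positivity
  have hn' : (n : ℝ) ≠ 0 := by positivity
  have hN : (k + n : ℝ) ≠ 0 := by positivity
  have hcompl : 1 - k / (k + n : ℝ) = n / (k + n) := by field_simp; ring
  rw [binEntropy, hcompl, log_div (by positivity) (by positivity), log_mul (by positivity) (by positivity),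
    log_pow, log_pow, log_pow, log_inv, log_inv, log_div hk' hN, log_div hn' hN]
  field_simp
  push_cast
  ring

lemma log_two_lt_binEntropy_add : log 2 < binEntropy (9 / 25) + binEntropy (49 / 50) := by
  have h₁ : 25 * binEntropy (9 / 25) = log (25 ^ 25 / (9 ^ 9 * 16 ^ 16)) := by
    convert add_mul_binEntropy_div_add 9 16 (by norm_num) (by norm_num) using 3 <;> norm_num
  have h₂ : 50 * binEntropy (49 / 50) = log (50 ^ 50 / 49 ^ 49) := by
    convert add_mul_binEntropy_div_add 49 1 (by norm_num) (by norm_num) using 3 <;> norm_num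
  have key : log (2 ^ 50) < log ((25 ^ 25 / (9 ^ 9 * 16 ^ 16)) ^ 2 * (50 ^ 50 / 49 ^ 49)) :=
    log_lt_log (by norm_num) (by norm_num)
  rw [log_mul (by positivity) (by positivity), log_pow, log_pow] at key
  linarith

theorem generalized_decohering_power_gt_decohering_power_relent :
    ∃ a b : ℂ, ‖a‖ ^ 2 + ‖b‖ ^ 2 = 1 ∧
      ∃ ρ : Matrix (Fin 2) (Fin 2) ℂ, IsDensity ρ ∧
        ∀ θ : ℝ,
          1 - H (‖(Uab a b).mulVec (psi θ) 0‖ ^ 2) <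
            Cr2 ρ - Cr2 (Uab a b * ρ * (Uab a b)ᴴ) := by
  have hw : ‖(![3 / 5, 4 / 5] : Fin 2 → ℂ) 0‖ ^ 2 + ‖(![3 / 5, 4 / 5] : Fin 2 → ℂ) 1‖ ^ 2 = 1 := by
    norm_num
  have hUw : Uab (3 / 5 : ℝ) (4 / 5 : ℝ) *ᵥ ![3 / 5, 4 / 5] = ![1, 0] := by
    ext i; fin_cases i <;> norm_num [Uab, mulVec, dotProduct, Fin.sum_univ_two, map_ofNat]
  refine ⟨(3 / 5 : ℝ), (4 / 5 : ℝ), by norm_num, outer ![3 / 5, 4 / 5],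
    isDensity_outer _ (by simpa [Fin.sum_univ_two] using hw), fun θ => ?_⟩
  have hdecoh : H (49 / 50) ≤ H (‖(Uab (3 / 5 : ℝ) (4 / 5 : ℝ) *ᵥ psi θ) 0‖ ^ 2) := by
    refine H_le_H_of_abs_sub_half_le (by norm_num) (by norm_num) ?_
    rw [norm_Uab_mulVec_psi_zero_sq, show |49 / 50 - 2⁻¹| = (12 / 25 : ℝ) by norm_num, abs_le]
    constructor <;> linarith [neg_one_le_cos θ, cos_le_one θ]
  have hgap : 1 - H (49 / 50) < H (9 / 25) := by
    rw [H_eq_binEntropy_div_log_two, H_eq_binEntropy_div_log_two, sub_lt_iff_lt_add, ← add_div,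
      one_lt_div (log_pos one_lt_two)]
    linarith [log_two_lt_binEntropy_add]
  rw [mul_outer_mul_conjTranspose, hUw, Cr2_outer _ hw, Cr2_outer _ (by norm_num)]
  have hρ₀₀ : ‖(3 / 5 : ℂ)‖ ^ 2 = 9 / 25 := by norm_num
  simp only [cons_val_zero, norm_one, one_pow, H_one, sub_zero, hρ₀₀]
  linarith
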